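/- Let (G,B,w) be a finite weighted graph with boundary B whose interior is Ω. Then for any α ∈ A^{k+1}(G) and β ∈ A^k(G), the first Green's formula holds: ⟨δα, β⟩_Ω = ⟨α, dβ⟩_G − ⟨𝐍α, β⟩_{∂Ω}, where 𝐍α(v,v_1,...,v_k) = (Σ_{u∈Ω} α(u,v,v_1,...,v_k) w(u,v,v_1,...,v_k)) / w(v,v_1,...,v_k) for boundary (k+1)-cliques {v,v_1,...,v_k} with v ∈ B, v_i ∈ Ω. -/

import Mathlib

open scoped Classical

namespace GraphHodge


variable {X : Type*}

/-- A tuple of vertices forms a clique: any two distinct indices give adjacent vertices. -/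
def IsTupleClique (G : SimpleGraph X) {m : ℕ} (v : Fin m → X) : Prop :=
  ∀ i j : Fin m, i ≠ j → G.Adj (v i) (v j)

/-- Indicator function of cliques. -/
noncomputable def cliqueInd (G : SimpleGraph X) {m : ℕ} (v : Fin m → X) : ℝ :=
  if IsTupleClique G v then 1 else 0

/-- A `k`-form on a graph: skew-symmetric and supported on `(k+1)`-cliques. -/
def IsGraphForm (G : SimpleGraph X) (k : ℕ) (α : (Fin (k + 1) → X) → ℝ) : Prop :=
  (∀ v, ¬ IsTupleClique G v → α v = 0) ∧
  ∀ (σ : Equiv.Perm (Fin (k + 1))) (v : Fin (k + 1) → X),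
    α (v ∘ σ) = ((Equiv.Perm.sign σ : ℤ) : ℝ) * α v

/-- The exterior differential of a `k`-form on a graph. -/
noncomputable def gd (G : SimpleGraph X) {k : ℕ} (α : (Fin (k + 1) → X) → ℝ) :
    (Fin (k + 2) → X) → ℝ :=
  fun v => cliqueInd G v * ∑ j : Fin (k + 2), (-1 : ℝ) ^ (j : ℕ) * α (v ∘ j.succAbove)

/-- Tensor product of an `r`-form and an `s`-form on a graph. -/
noncomputable def gtensor (G : SimpleGraph X) {r s : ℕ}
    (α : (Fin (r + 1) → X) → ℝ) (β : (Fin (s + 1) → X) → ℝ) :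
    (Fin (r + s + 1) → X) → ℝ :=
  fun v => cliqueInd G v * α (fun i => v ⟨i.1, by have := i.2; omega⟩) *
    β (fun i => v ⟨r + i.1, by have := i.2; omega⟩)

/-- Skew-symmetrization operator on functions of vertex tuples. -/
noncomputable def skewSym {m : ℕ} (f : (Fin m → X) → ℝ) : (Fin m → X) → ℝ :=
  fun v => ((m.factorial : ℝ))⁻¹ *
    ∑ σ : Equiv.Perm (Fin m), ((Equiv.Perm.sign σ : ℤ) : ℝ) * f (v ∘ σ)

/-- Wedge product of graph forms: skew-symmetrization of the tensor product. -/
noncomputable def gwedge (G : SimpleGraph X) {r s : ℕ}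
    (α : (Fin (r + 1) → X) → ℝ) (β : (Fin (s + 1) → X) → ℝ) :
    (Fin (r + s + 1) → X) → ℝ :=
  skewSym (gtensor G α β)

/-- A positive weight on all cliques of a graph, symmetric in its arguments and
vanishing off cliques. -/
structure GraphWeight (G : SimpleGraph X) where
  w : ∀ {m : ℕ}, (Fin (m + 1) → X) → ℝ
  symm : ∀ {m : ℕ} (σ : Equiv.Perm (Fin (m + 1))) (v : Fin (m + 1) → X), w (v ∘ σ) = w v
  pos : ∀ {m : ℕ} (v : Fin (m + 1) → X), IsTupleClique G v → 0 < w v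
  eq_zero : ∀ {m : ℕ} (v : Fin (m + 1) → X), ¬ IsTupleClique G v → w v = 0

variable {G : SimpleGraph X}

/-- The weighted inner product on `k`-forms of a finite weighted graph. -/
noncomputable def formInner [Fintype X] (w : GraphWeight G) {k : ℕ}
    (α β : (Fin (k + 1) → X) → ℝ) : ℝ :=
  (((k + 1).factorial : ℝ))⁻¹ * ∑ v : Fin (k + 1) → X, α v * β v * w.w v

/-- The codifferential (formal adjoint of `gd`) on a finite weighted graph. -/
noncomputable def gdelta [Fintype X] (w : GraphWeight G) {k : ℕ}
    (α : (Fin (k + 2) → X) → ℝ) : (Fin (k + 1) → X) → ℝ :=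
  fun v => (w.w v)⁻¹ * ∑ u : X, α (Fin.cons u v) * w.w (Fin.cons u v)

/-- `(G, B)` is a graph with boundary `B`: no edges inside `B`, and every boundary
vertex is adjacent to some interior vertex. -/
def IsBoundary (G : SimpleGraph X) (B : Set X) : Prop :=
  (∀ a ∈ B, ∀ b ∈ B, ¬ G.Adj a b) ∧ ∀ b ∈ B, ∃ a, a ∉ B ∧ G.Adj b a

/-- A boundary tuple: a clique whose first vertex is in `B` and the rest interior. -/
def IsBdryTuple (G : SimpleGraph X) (B : Set X) {k : ℕ} (v : Fin (k + 1) → X) : Prop :=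
  IsTupleClique G v ∧ v 0 ∈ B ∧ ∀ i : Fin k, v i.succ ∉ B

/-- A boundary `k`-form: supported on boundary `(k+1)`-cliques and skew-symmetric in
its last `k` variables. -/
def IsBdryForm (G : SimpleGraph X) (B : Set X) (k : ℕ) (φ : (Fin (k + 1) → X) → ℝ) : Prop :=
  (∀ v, ¬ IsBdryTuple G B v → φ v = 0) ∧
  ∀ (σ : Equiv.Perm (Fin k)) (v : Fin (k + 1) → X),
    φ (Fin.cons (v 0) (fun i => v (σ i).succ)) = ((Equiv.Perm.sign σ : ℤ) : ℝ) * φ v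

/-- Inner product over tuples entirely inside the interior `Ω = Bᶜ`. -/
noncomputable def innerInt [Fintype X] (w : GraphWeight G) (B : Set X) {k : ℕ}
    (α β : (Fin (k + 1) → X) → ℝ) : ℝ :=
  (((k + 1).factorial : ℝ))⁻¹ *
    ∑ v : Fin (k + 1) → X, (if ∀ i, v i ∉ B then (1 : ℝ) else 0) * (α v * β v * w.w v)

/-- Boundary inner product: first vertex in `B`, the others interior. -/
noncomputable def innerBdry [Fintype X] (w : GraphWeight G) (B : Set X) {k : ℕ}
    (α β : (Fin (k + 1) → X) → ℝ) : ℝ :=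
  ((k.factorial : ℝ))⁻¹ *
    ∑ v : Fin (k + 1) → X,
      (if v 0 ∈ B ∧ ∀ i : Fin k, v i.succ ∉ B then (1 : ℝ) else 0) * (α v * β v * w.w v)

/-- The normal-trace operator `𝐍` on `(k+1)`-forms. -/
noncomputable def Nop [Fintype X] (w : GraphWeight G) (B : Set X) {k : ℕ}
    (α : (Fin (k + 2) → X) → ℝ) : (Fin (k + 1) → X) → ℝ :=
  fun v => (w.w v)⁻¹ *
    ∑ u : X, (if u ∉ B then (1 : ℝ) else 0) * α (Fin.cons u v) * w.w (Fin.cons u v)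

/-- The Dirichlet-trace operator `𝐃`: forget the boundary vertex. -/
def Dop {k : ℕ} (α : (Fin (k + 1) → X) → ℝ) : (Fin (k + 2) → X) → ℝ :=
  fun v => α (fun i => v i.succ)


section GreenProof

variable {X : Type*} {G : SimpleGraph X}

private lemma swap_succ_apply' {n : ℕ} (a b m : Fin n) :
    Equiv.swap a.succ b.succ m.succ = (Equiv.swap a b m).succ := by
  rcases eq_or_ne m a with rfl | hma
  · rw [Equiv.swap_apply_left, Equiv.swap_apply_left]
  rcases eq_or_ne m b with rfl | hmb
  · rw [Equiv.swap_apply_right, Equiv.swap_apply_right]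
  · rw [Equiv.swap_apply_of_ne_of_ne hma hmb,
      Equiv.swap_apply_of_ne_of_ne (fun h => hma (Fin.succ_injective _ h))
        (fun h => hmb (Fin.succ_injective _ h))]

private lemma swap_succ_zero' {n : ℕ} (a b : Fin n) :
    Equiv.swap a.succ b.succ (0 : Fin (n+1)) = 0 :=
  Equiv.swap_apply_of_ne_of_ne (Fin.succ_ne_zero a).symm (Fin.succ_ne_zero b).symm

private lemma sign_swap_succ' {n : ℕ} (a b : Fin n) :
    Equiv.Perm.sign (Equiv.swap a.succ b.succ) = Equiv.Perm.sign (Equiv.swap a b) := by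
  rcases eq_or_ne a b with rfl | h
  · simp
  · rw [Equiv.Perm.sign_swap (fun hh => h (Fin.succ_injective _ hh)), Equiv.Perm.sign_swap h]

private lemma clique_of_cons' {k : ℕ} {u : X} {v : Fin (k+1) → X}
    (h : IsTupleClique G (Fin.cons u v)) : IsTupleClique G v := by
  intro i j hij
  have := h i.succ j.succ (fun he => hij (Fin.succ_injective _ he))
  simpa using this

private lemma sum_comp_perm [Fintype X] {n : ℕ} (σ : Equiv.Perm (Fin n))
    (F : (Fin n → X) → ℝ) :
    (∑ v : Fin n → X, F (v ∘ σ)) = ∑ v : Fin n → X, F v := by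
  refine Fintype.sum_bijective (fun v : Fin n → X => v ∘ σ) ⟨?_, ?_⟩ _ _ (fun v => rfl)
  · intro a b h
    funext i
    have := congrFun h (σ.symm i)
    simpa using this
  · intro g
    exact ⟨g ∘ σ.symm, by funext i; simp⟩

private lemma sum_cons [Fintype X] {n : ℕ} (F : (Fin (n+1) → X) → ℝ) :
    (∑ y : Fin (n+1) → X, F y) = ∑ u : X, ∑ v : Fin n → X, F (Fin.cons u v) := by
  rw [← Equiv.sum_comp (Fin.consEquiv (fun _ : Fin (n+1) => X)) F, Fintype.sum_prod_type]
  rfl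

private lemma cancel_aux [Fintype X] (w : GraphWeight G) {k : ℕ} (v : Fin (k+1) → X)
    (g : X → ℝ) (b : ℝ) :
    ((w.w v)⁻¹ * ∑ u : X, g u * w.w (Fin.cons u v)) * b * w.w v
      = ∑ u : X, g u * b * w.w (Fin.cons u v) := by
  by_cases hc : IsTupleClique G v
  · have hw := (w.pos v hc).ne'
    have h1 : ((w.w v)⁻¹ * ∑ u : X, g u * w.w (Fin.cons u v)) * b * w.w v
        = ((w.w v)⁻¹ * w.w v) * ((∑ u : X, g u * w.w (Fin.cons u v)) * b) := by ring
    rw [h1, inv_mul_cancel₀ hw, one_mul, Finset.sum_mul]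
    exact Finset.sum_congr rfl fun u _ => by ring
  · have h0 : ∀ u : X, w.w (Fin.cons u v) = 0 := fun u =>
      w.eq_zero _ (fun hcc => hc (clique_of_cons' hcc))
    simp [w.eq_zero v hc, h0]

end GreenProof

/-- first Green's formula
`⟨δα, β⟩_Ω = ⟨α, dβ⟩_G − ⟨𝐍α, β⟩_{∂Ω}` on a finite weighted graph with boundary. -/
theorem green_first {X : Type*} [Fintype X] (G : SimpleGraph X) (B : Set X)
    (hB : IsBoundary G B) (w : GraphWeight G) (k : ℕ)
    (α : (Fin (k + 2) → X) → ℝ) (hα : IsGraphForm G (k + 1) α)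
    (β : (Fin (k + 1) → X) → ℝ) (hβ : IsGraphForm G k β) :
    innerInt w B (gdelta w α) β = formInner w α (gd G β) - innerBdry w B (Nop w B α) β := by
  classical
  set A : ℝ := ∑ v : Fin (k+1) → X, (if ∀ i, v i ∉ B then (1:ℝ) else 0) *
      ∑ u : X, α (Fin.cons u v) * β v * w.w (Fin.cons u v) with hA
  set T : ℝ := ∑ v : Fin (k+1) → X, ∑ u : X,
      (if u ∉ B ∧ v 0 ∈ B ∧ ∀ i, i ≠ 0 → v i ∉ B then (1:ℝ) else 0) *
        (α (Fin.cons u v) * β v * w.w (Fin.cons u v)) with hT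
  set S : ℝ := ∑ v : Fin (k+1) → X, ∑ u : X,
      α (Fin.cons u v) * β v * w.w (Fin.cons u v) with hS
  have hfac : ((k+1).factorial : ℝ) ≠ 0 := Nat.cast_ne_zero.2 (k+1).factorial_ne_zero
  have hfack : (k.factorial : ℝ) ≠ 0 := Nat.cast_ne_zero.2 k.factorial_ne_zero
  -- Step 1 : the interior inner product
  have h1 : innerInt w B (gdelta w α) β = (((k+1).factorial : ℝ))⁻¹ * A := by
    rw [innerInt, hA]
    congr 1
    refine Finset.sum_congr rfl fun v _ => ?_
    congr 1
    simp only [gdelta]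
    exact cancel_aux w v (fun u => α (Fin.cons u v)) (β v)
  -- Step 3 : the boundary inner product
  have h3 : innerBdry w B (Nop w B α) β = ((k.factorial : ℝ))⁻¹ * T := by
    rw [innerBdry, hT]
    congr 1
    refine Finset.sum_congr rfl fun v _ => ?_
    have hc : Nop w B α v * β v * w.w v
        = ∑ u : X, ((if u ∉ B then (1:ℝ) else 0) * α (Fin.cons u v)) * β v
            * w.w (Fin.cons u v) := by
      simp only [Nop]
      exact cancel_aux w v (fun u => (if u ∉ B then (1:ℝ) else 0) * α (Fin.cons u v)) (β v)
    rw [hc, Finset.mul_sum]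
    refine Finset.sum_congr rfl fun u _ => ?_
    by_cases hu : u ∉ B
    · by_cases hbd : v 0 ∈ B ∧ ∀ i : Fin k, v i.succ ∉ B
      · have hrest : ∀ i, i ≠ 0 → v i ∉ B := by
          intro i hi
          obtain ⟨m, rfl⟩ := Fin.eq_succ_of_ne_zero hi
          exact hbd.2 m
        rw [if_pos hbd, if_pos hu, if_pos ⟨hu, hbd.1, hrest⟩]
        ring
      · have hnc : ¬(u ∉ B ∧ v 0 ∈ B ∧ ∀ i, i ≠ 0 → v i ∉ B) := by
          rintro ⟨-, h0, hr⟩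
          exact hbd ⟨h0, fun m => hr m.succ (Fin.succ_ne_zero m)⟩
        rw [if_neg hbd, if_neg hnc]
        ring
    · have hnc : ¬(u ∉ B ∧ v 0 ∈ B ∧ ∀ i, i ≠ 0 → v i ∉ B) := fun hcon => hu hcon.1
      rw [if_neg hu, if_neg hnc]
      ring
  -- Step 2 : the full inner product with dβ
  have h2 : formInner w α (gd G β) = (((k+1).factorial : ℝ))⁻¹ * S := by
    have hcast : ∀ m : ℕ, ((((-1:ℤˣ)^m : ℤˣ) : ℤ) : ℝ) = (-1:ℝ)^m := by
      intro m
      rw [Units.val_pow_eq_pow_val]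
      push_cast
      ring
    have key : ∀ j : Fin (k+2),
        (∑ x : Fin (k+2) → X, (-1:ℝ)^(j:ℕ) * (α x * β (x ∘ j.succAbove) * w.w x))
          = ∑ y : Fin (k+2) → X, α y * β (fun i => y i.succ) * w.w y := by
      intro j
      rw [← sum_comp_perm (j.cycleRange)
        (fun x => (-1:ℝ)^(j:ℕ) * (α x * β (x ∘ j.succAbove) * w.w x))]
      refine Finset.sum_congr rfl fun y _ => ?_
      have hcomp : (y ∘ j.cycleRange) ∘ j.succAbove = fun i => y i.succ := by
        funext i
        simp [Function.comp, Fin.cycleRange_succAbove]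
      have hne : (-1:ℝ)^(j:ℕ) * (-1:ℝ)^(j:ℕ) = 1 := by
        rw [← pow_add]
        exact Even.neg_one_pow ⟨(j:ℕ), rfl⟩
      rw [hcomp, hα.2 j.cycleRange y, w.symm j.cycleRange y, Fin.sign_cycleRange, hcast]
      calc (-1:ℝ)^(j:ℕ) * ((-1:ℝ)^(j:ℕ) * α y * β (fun i => y i.succ) * w.w y)
          = ((-1:ℝ)^(j:ℕ) * (-1:ℝ)^(j:ℕ)) * (α y * β (fun i => y i.succ) * w.w y) := by ring
        _ = α y * β (fun i => y i.succ) * w.w y := by rw [hne, one_mul]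
    have expand : ∀ x : Fin (k+2) → X, α x * gd G β x * w.w x
        = ∑ j : Fin (k+2), (-1:ℝ)^(j:ℕ) * (α x * β (x ∘ j.succAbove) * w.w x) := by
      intro x
      simp only [gd]
      by_cases hx : IsTupleClique G x
      · rw [cliqueInd, if_pos hx, one_mul, Finset.mul_sum, Finset.sum_mul]
        exact Finset.sum_congr rfl fun j _ => by ring
      · rw [w.eq_zero x hx]
        simp
    have hC : (∑ y : Fin (k+2) → X, α y * β (fun i => y i.succ) * w.w y) = S := by
      rw [sum_cons (fun y => α y * β (fun i => y i.succ) * w.w y), hS, Finset.sum_comm]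
      refine Finset.sum_congr rfl fun v _ => Finset.sum_congr rfl fun u _ => ?_
      have : (fun i : Fin (k+1) => (Fin.cons u v : Fin (k+2) → X) i.succ) = v := by
        funext i
        simp
      rw [this]
    rw [formInner, Finset.sum_congr rfl fun x _ => expand x, Finset.sum_comm,
      Finset.sum_congr rfl fun j _ => key j, hC, Finset.sum_const, Finset.card_univ,
      Fintype.card_fin, nsmul_eq_mul]
    have hf2 : ((k+1+1).factorial : ℝ) = ((k:ℝ)+2) * ((k+1).factorial : ℝ) := by
      rw [Nat.factorial_succ]
      push_cast
      ring
    rw [hf2]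
    have h2ne : ((k:ℝ)+2) ≠ 0 := by positivity
    field_simp
    push_cast
    ring
  -- Step 4 : decomposition of S
  have pointwise : ∀ (u : X) (v : Fin (k+1) → X),
      α (Fin.cons u v) * β v * w.w (Fin.cons u v)
        = (if ∀ i, v i ∉ B then (1:ℝ) else 0) * (α (Fin.cons u v) * β v * w.w (Fin.cons u v))
          + ∑ j : Fin (k+1), (if u ∉ B ∧ v j ∈ B ∧ ∀ i, i ≠ j → v i ∉ B then (1:ℝ) else 0)
              * (α (Fin.cons u v) * β v * w.w (Fin.cons u v)) := by
    intro u v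
    by_cases hcq : IsTupleClique G (Fin.cons u v)
    · by_cases hΩ : ∀ i, v i ∉ B
      · rw [if_pos hΩ, one_mul, Finset.sum_eq_zero, add_zero]
        intro j _
        rw [if_neg, zero_mul]
        rintro ⟨-, hvj, -⟩
        exact hΩ j hvj
      · rw [if_neg hΩ, zero_mul, zero_add]
        push_neg at hΩ
        obtain ⟨j0, hj0⟩ := hΩ
        have hu : u ∉ B := fun huB => hB.1 u huB (v j0) hj0
          (by simpa using hcq 0 j0.succ (Ne.symm (Fin.succ_ne_zero j0)))
        have hrest : ∀ i, i ≠ j0 → v i ∉ B := by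
          intro i hi hvi
          exact hB.1 (v i) hvi (v j0) hj0
            (by simpa using hcq i.succ j0.succ (fun h => hi (Fin.succ_injective _ h)))
        have heach : ∀ j : Fin (k+1),
            (if u ∉ B ∧ v j ∈ B ∧ ∀ i, i ≠ j → v i ∉ B then (1:ℝ) else 0)
              * (α (Fin.cons u v) * β v * w.w (Fin.cons u v))
            = if j = j0 then α (Fin.cons u v) * β v * w.w (Fin.cons u v) else 0 := by
          intro j
          rcases eq_or_ne j j0 with rfl | hj
          · rw [if_pos ⟨hu, hj0, hrest⟩, if_pos rfl, one_mul]
          · rw [if_neg, if_neg hj, zero_mul]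
            rintro ⟨-, hvj, -⟩
            exact hrest j hj hvj
        rw [Finset.sum_congr rfl fun j _ => heach j, Finset.sum_ite_eq' Finset.univ j0,
          if_pos (Finset.mem_univ _)]
    · have h0 : w.w (Fin.cons u v) = 0 := w.eq_zero _ hcq
      simp [h0]
  have reidx : ∀ j : Fin (k+1),
      (∑ v : Fin (k+1) → X, ∑ u : X,
        (if u ∉ B ∧ v j ∈ B ∧ ∀ i, i ≠ j → v i ∉ B then (1:ℝ) else 0)
          * (α (Fin.cons u v) * β v * w.w (Fin.cons u v))) = T := by
    intro j
    rw [hT, ← sum_comp_perm (Equiv.swap (0 : Fin (k+1)) j) (fun v => ∑ u : X,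
        (if u ∉ B ∧ v j ∈ B ∧ ∀ i, i ≠ j → v i ∉ B then (1:ℝ) else 0)
          * (α (Fin.cons u v) * β v * w.w (Fin.cons u v)))]
    refine Finset.sum_congr rfl fun v _ => Finset.sum_congr rfl fun u _ => ?_
    have hvj : (v ∘ (Equiv.swap (0 : Fin (k+1)) j)) j = v 0 := by
      simp [Equiv.swap_apply_right]
    have hiff : (∀ i, i ≠ j → (v ∘ (Equiv.swap (0 : Fin (k+1)) j)) i ∉ B)
        ↔ (∀ i, i ≠ 0 → v i ∉ B) := by
      constructor
      · intro h m hm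
        have h1 : Equiv.swap (0 : Fin (k+1)) j m ≠ j := by
          intro he
          apply hm
          have := (Equiv.swap (0 : Fin (k+1)) j).injective
            (he.trans (Equiv.swap_apply_left (0 : Fin (k+1)) j).symm)
          exact this
        have := h (Equiv.swap (0 : Fin (k+1)) j m) h1
        simpa [Equiv.swap_apply_self] using this
      · intro h i hi
        apply h
        intro he
        apply hi
        have := (Equiv.swap (0 : Fin (k+1)) j).injective
          (he.trans (Equiv.swap_apply_right (0 : Fin (k+1)) j).symm)
        exact this
    have hind : (if u ∉ B ∧ (v ∘ (Equiv.swap (0 : Fin (k+1)) j)) j ∈ B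
          ∧ ∀ i, i ≠ j → (v ∘ (Equiv.swap (0 : Fin (k+1)) j)) i ∉ B then (1:ℝ) else 0)
        = (if u ∉ B ∧ v 0 ∈ B ∧ ∀ i, i ≠ 0 → v i ∉ B then (1:ℝ) else 0) := by
      refine if_congr ?_ rfl rfl
      rw [hvj]
      exact and_congr_right fun _ => and_congr_right fun _ => hiff
    have hcons : Fin.cons u (v ∘ (Equiv.swap (0 : Fin (k+1)) j))
        = (Fin.cons u v : Fin (k+2) → X) ∘ (Equiv.swap (0 : Fin (k+1)).succ j.succ) := by
      funext i
      refine Fin.cases ?_ (fun m => ?_) i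
      · simp only [Function.comp_apply, swap_succ_zero', Fin.cons_zero]
      · simp only [Function.comp_apply, swap_succ_apply', Fin.cons_succ]
    have hfeq : α (Fin.cons u (v ∘ (Equiv.swap (0 : Fin (k+1)) j)))
          * β (v ∘ (Equiv.swap (0 : Fin (k+1)) j))
          * w.w (Fin.cons u (v ∘ (Equiv.swap (0 : Fin (k+1)) j)))
        = α (Fin.cons u v) * β v * w.w (Fin.cons u v) := by
      rw [hcons, hα.2 (Equiv.swap (0 : Fin (k+1)).succ j.succ) (Fin.cons u v),
        hβ.2 (Equiv.swap (0 : Fin (k+1)) j) v,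
        w.symm (Equiv.swap (0 : Fin (k+1)).succ j.succ) (Fin.cons u v),
        sign_swap_succ']
      rcases Int.units_eq_one_or (Equiv.Perm.sign (Equiv.swap (0 : Fin (k+1)) j)) with hs | hs <;>
        rw [hs] <;> push_cast <;> ring
    rw [hind, hfeq]
  have h4 : S = A + ((k:ℝ)+1) * T := by
    rw [hS, hA]
    have hsplit : ∀ v : Fin (k+1) → X,
        (∑ u : X, α (Fin.cons u v) * β v * w.w (Fin.cons u v))
          = (if ∀ i, v i ∉ B then (1:ℝ) else 0)
              * (∑ u : X, α (Fin.cons u v) * β v * w.w (Fin.cons u v))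
            + ∑ u : X, ∑ j : Fin (k+1),
                (if u ∉ B ∧ v j ∈ B ∧ ∀ i, i ≠ j → v i ∉ B then (1:ℝ) else 0)
                  * (α (Fin.cons u v) * β v * w.w (Fin.cons u v)) := by
      intro v
      rw [Finset.mul_sum, ← Finset.sum_add_distrib]
      exact Finset.sum_congr rfl fun u _ => pointwise u v
    rw [Finset.sum_congr rfl fun v _ => hsplit v, Finset.sum_add_distrib]
    congr 1
    rw [Finset.sum_congr rfl fun v (_ : v ∈ Finset.univ) => Finset.sum_comm, Finset.sum_comm,
      Finset.sum_congr rfl fun j _ => reidx j, Finset.sum_const, Finset.card_univ,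
      Fintype.card_fin, nsmul_eq_mul]
    push_cast
    ring
  rw [h1, h2, h3, h4]
  have hfact : ((k+1).factorial : ℝ) = ((k:ℝ)+1) * (k.factorial : ℝ) := by
    rw [Nat.factorial_succ]
    push_cast
    ring
  rw [hfact]
  have hk1 : ((k:ℝ)+1) ≠ 0 := by positivity
  field_simp
  ring


end GraphHodge
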